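/- arXiv:2103.15003 — 3 statements merged into one kernel-verified Lean document; each statement's English description precedes it below -/
import Mathlib

section
/- Fix an integer $s \geq 2$ and integers $1 = k_s < \cdots < k_2 < k_1$. For a prime $q \geq 3$ with $q \nmid k_i$ for all $i$, define $T(\underline{a};q) = \sum_{n \bmod q} e^{2\pi i (a_1 n^{k_1} + \cdots + a_s n^{k_s})/q}$. Assume the Weil bound: for every $\underline{a} \not\equiv 0 \pmod{q}$ with some nonzero coefficient of a nonlinear term, $|T(\underline{a};q)| \leq k_1 q^{1/2}$. Then at least $(k_1^{-2}/4) q^s$ tuples $\underline{a} \bmod q^s$ satisfy $|T(\underline{a};q)| \geq \frac{1}{2} q^{1/2}$. -/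
/-!
Write `T a = ∑ₙ ψ (a ⬝ᵥ φ n)` with `φ n = (n ^ kᵢ)ᵢ` and `ψ` the standard additive character of
`ZMod q`. Since `k_s = 1`, `φ` is injective, so Parseval gives `∑ₐ ‖T a‖² = q ^ (s + 1)`.
The tuple `0` contributes `q²`, the nonzero purely linear tuples contribute nothing, the tuples
with `‖T a‖ < √q / 2` at most `q ^ s · q / 4`, and by the Weil bound each remaining tuple at most
`k₁² q`. Hence there are at least `q ^ s / (4 k₁²)` of the latter.
-/

open Finset

namespace AddChar

lemma map_sum_eq_prod {ι M A : Type*} [CommMonoid M] [AddCommMonoid A]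
    (ψ : AddChar A M) (s : Finset ι) (f : ι → A) : ψ (∑ i ∈ s, f i) = ∏ i ∈ s, ψ (f i) := by
  classical
  induction s using Finset.induction_on with
  | empty => simp
  | insert i s hi ih => rw [sum_insert hi, prod_insert hi, map_add_eq_mul, ih]

variable {R R' : Type*} [CommRing R] [Fintype R] [CommRing R'] [IsDomain R']
  {ι : Type*} [Fintype ι] [DecidableEq ι]

lemma sum_apply_dotProduct [DecidableEq R] {ψ : AddChar R R'} (hψ : ψ.IsPrimitive) (c : ι → R) :
    ∑ a : ι → R, ψ (a ⬝ᵥ c) = if c = 0 then (Fintype.card R : R') ^ Fintype.card ι else 0 := by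
  simp_rw [dotProduct, map_sum_eq_prod]
  rw [← Fintype.prod_sum fun i x ↦ ψ (x * c i)]
  simp only [sum_mulShift _ hψ, Nat.cast_ite, Nat.cast_zero, prod_ite_zero, prod_const, card_univ,
    mem_univ, true_implies, funext_iff, Pi.zero_apply]

/-- Parseval: expanding `‖·‖² = z * conj z`, orthogonality in `a` keeps only the pairs with
`φ x = φ y`. -/
lemma sum_norm_sq_sum_apply_dotProduct {X : Type*} [Fintype X] {ψ : AddChar R ℂ}
    (hψ : ψ.IsPrimitive) {φ : X → ι → R} (hφ : φ.Injective) :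
    ∑ a : ι → R, ‖∑ x, ψ (a ⬝ᵥ φ x)‖ ^ 2 =
      (Fintype.card R : ℝ) ^ Fintype.card ι * Fintype.card X := by
  classical
  apply Complex.ofReal_injective
  push_cast
  simp_rw [← Complex.mul_conj', map_sum, ← map_neg_eq_conj, sum_mul_sum, ← map_add_eq_mul,
    ← dotProduct_neg, ← dotProduct_add, ← sub_eq_add_neg]
  rw [sum_comm]
  simp_rw [sum_comm (γ := ι → R), sum_apply_dotProduct hψ, sub_eq_zero, hφ.eq_iff, sum_ite_eq,
    mem_univ, if_true, sum_const, card_univ, nsmul_eq_mul, mul_comm]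

lemma exists_ne_zero_of_sum_apply_dotProduct_ne_zero {ψ : AddChar R R'}
    (hψ : ψ.IsPrimitive) {φ : R → ι → R} {j : ι} (hφ : ∀ x, φ x j = x) {a : ι → R} (ha : a ≠ 0)
    (hsum : ∑ x, ψ (a ⬝ᵥ φ x) ≠ 0) : ∃ i ≠ j, a i ≠ 0 := by
  classical
  by_contra! hlin
  have ha_single : a = Pi.single j (a j) := by
    ext i
    by_cases hi : i = j
    · subst hi; simp
    · rw [Pi.single_eq_of_ne hi, hlin i hi]
  have hj : a j ≠ 0 := fun h ↦ ha (by rw [ha_single, h, Pi.single_zero])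
  rw [ha_single] at hsum
  simp_rw [single_dotProduct, hφ, mul_comm (a j), sum_mulShift _ hψ, if_neg hj,
    Nat.cast_zero] at hsum
  exact hsum rfl

end AddChar

lemma sum_exp_eq_sum_stdAddChar_dotProduct {q : ℕ} [NeZero q] {ι : Type*} [Fintype ι]
    (k : ι → ℕ) (a : ι → ZMod q) :
    ∑ n : ZMod q, Complex.exp (2 * Real.pi * Complex.I *
        ((∑ i, ((a i).val : ℂ) * ((n.val : ℂ)) ^ (k i)) / (q : ℂ))) =
      ∑ n : ZMod q, ZMod.stdAddChar (a ⬝ᵥ fun i ↦ n ^ k i) := by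
  refine sum_congr rfl fun n _ ↦ ?_
  have hcast : (a ⬝ᵥ fun i ↦ n ^ k i) = ((∑ i, (a i).val * n.val ^ k i : ℕ) : ZMod q) := by
    simp [dotProduct]
  rw [hcast, ZMod.stdAddChar_apply, ZMod.toCircle_natCast, mul_div_assoc]
  push_cast
  rfl

lemma sum_sq_le_of_le_of_ne {A : Type*} [Fintype A] (g : A → ℝ) (hg : ∀ a, 0 ≤ g a) (a₀ : A)
    {t M : ℝ} (ht : 0 ≤ t) (hM : 0 ≤ M) (hle : ∀ a ≠ a₀, t ≤ g a → g a ≤ M) :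
    ∑ a, g a ^ 2 ≤ g a₀ ^ 2 + {a | t ≤ g a}.ncard * M ^ 2 + Fintype.card A * t ^ 2 := by
  classical
  have hpoint (a : A) : g a ^ 2 ≤
      (if a = a₀ then g a₀ ^ 2 else 0) + (if t ≤ g a then M ^ 2 else 0) + t ^ 2 := by
    have hga := hg a
    split_ifs with ha hbig hbig
    · subst ha; nlinarith
    · subst ha; nlinarith
    · nlinarith [hle a ha hbig]
    · nlinarith [not_le.mp hbig]
  calc ∑ a, g a ^ 2
      ≤ ∑ a, ((if a = a₀ then g a₀ ^ 2 else 0) + (if t ≤ g a then M ^ 2 else 0) + t ^ 2) :=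
        sum_le_sum fun a _ ↦ hpoint a
    _ = _ := by
      rw [sum_add_distrib, sum_add_distrib, sum_ite_eq', ← sum_filter, sum_const, sum_const,
        Set.ncard_eq_toFinset_card', Set.toFinset_ofPred, card_univ]
      simp

/-- A positive proportion of coefficient tuples give large complete exponential sums:
assuming the Weil bound `|T(a;q)| ≤ k₁ √q` for every tuple with a nonzero coefficient on a
nonlinear term, at least `(k₁⁻²/4) q^s` tuples `a mod q` satisfy `|T(a;q)| ≥ (1/2)√q`. -/
theorem many_large_exponential_sums
    (q s : ℕ) (hq : q.Prime) [NeZero q] (hs : 2 ≤ s)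
    (k : Fin s → ℕ) (hk_last : k ⟨s - 1, by omega⟩ = 1)
    (T : (Fin s → ZMod q) → ℂ)
    (hT : ∀ a, T a = ∑ n : ZMod q, Complex.exp (2 * Real.pi * Complex.I *
        ((∑ i : Fin s, ((a i).val : ℂ) * ((n.val : ℂ)) ^ (k i)) / (q : ℂ))))
    (hweil : ∀ a : Fin s → ZMod q, a ≠ 0 → (∃ i : Fin s, (i : ℕ) < s - 1 ∧ a i ≠ 0) →
      ‖T a‖ ≤ (k ⟨0, by omega⟩ : ℝ) * Real.sqrt q) :
    ((k ⟨0, by omega⟩ : ℝ))⁻¹ ^ 2 / 4 * (q : ℝ) ^ s ≤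
      ({a : Fin s → ZMod q | (1 / 2 : ℝ) * Real.sqrt q ≤ ‖T a‖}).ncard := by
  set K : ℝ := (k ⟨0, by omega⟩ : ℝ)
  set N : ℝ := (({a : Fin s → ZMod q | (1 / 2 : ℝ) * Real.sqrt q ≤ ‖T a‖}).ncard : ℝ)
  set last : Fin s := ⟨s - 1, by omega⟩
  have hψ := ZMod.isPrimitive_stdAddChar q
  let φ (n : ZMod q) (i : Fin s) : ZMod q := n ^ k i
  have hφ_last (n : ZMod q) : φ n last = n := by simp [φ, last, hk_last]
  simp_rw [sum_exp_eq_sum_stdAddChar_dotProduct] at hT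
  have hq0 : (0 : ℝ) < q := by exact_mod_cast hq.pos
  have hparseval : ∑ a, ‖T a‖ ^ 2 = (q : ℝ) ^ s * q := by
    simpa [hT, ZMod.card] using AddChar.sum_norm_sq_sum_apply_dotProduct hψ
      (φ := φ) fun n m h ↦ by simpa [hφ_last] using congrFun h last
  have hT_zero : ‖T 0‖ = q := by simp [hT, ZMod.card]
  have hbound (a) (ha : a ≠ 0) (hlarge : 1 / 2 * √(q : ℝ) ≤ ‖T a‖) : ‖T a‖ ≤ K * √q := by
    have hTa : T a ≠ 0 := norm_pos_iff.mp (by linarith [Real.sqrt_pos.mpr hq0])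
    rw [hT] at hTa
    obtain ⟨i, hi, hai⟩ := AddChar.exists_ne_zero_of_sum_apply_dotProduct_ne_zero hψ hφ_last ha hTa
    exact hweil a ha ⟨i, by simp only [last, Ne, Fin.ext_iff] at hi; omega, hai⟩
  have hcount := sum_sq_le_of_le_of_ne (fun a ↦ ‖T a‖) (fun a ↦ norm_nonneg _) 0 (by positivity)
    (by positivity) hbound
  rw [hparseval, hT_zero, mul_pow, mul_pow, Real.sq_sqrt hq0.le, Fintype.card_fun, ZMod.card,
    Fintype.card_fin] at hcount
  have hq_le : (q : ℝ) * 2 ≤ q ^ s :=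
    calc (q : ℝ) * 2 ≤ q ^ 2 := by rw [sq]; gcongr; exact_mod_cast hq.two_le
      _ ≤ q ^ s := pow_le_pow_right₀ (by exact_mod_cast hq.one_le) hs
  -- `hcount` divided by `q`, with `q ≤ q ^ s / 2` absorbing the contribution of `a = 0`
  have hkey : (q : ℝ) ^ s / 4 ≤ K ^ 2 * N := by push_cast at hcount; nlinarith
  -- `(K ^ 2)⁻¹ * K ^ 2 ≤ 1` holds also for `K = 0`, where `0⁻¹ = 0`
  calc K⁻¹ ^ 2 / 4 * q ^ s = (K ^ 2)⁻¹ * (q ^ s / 4) := by ring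
    _ ≤ (K ^ 2)⁻¹ * (K ^ 2 * N) := by gcongr
    _ = ((K ^ 2)⁻¹ * K ^ 2) * N := by ring
    _ ≤ N := mul_le_of_le_one_left (by positivity) inv_mul_le_one
end

section
/- Let $q \geq 2$ be an integer, $k \geq 2$ an integer, $a_1, b$ integers, and $y \in \mathbb{R}$ with $|y - 2\pi b/q| \leq V$ for some $V \geq 0$. Let $M \in \mathbb{R}$ and $N \geq 1$, and set $P(n) = 2\pi a_1 n^k / q + y n$. Suppose that for some constant $W > 0$ we have $|\sum_{M < n \leq M+u} e^{i(2\pi(a_1 n^k + b n)/q)}| \leq W$ for all $u \in [0, N]$. Then $\left| \sum_{M < n \leq M+N} e^{i P(n)} \right| \geq \lfloor N/q \rfloor \left| \sum_{n=1}^{q} e^{2\pi i (a_1 n^k + bn)/q} \right| - N V W - \sup_{0 \leq u < q} \left|\sum_{M + \lfloor N/q\rfloor q < n \leq M + \lfloor N/q\rfloor q + u} e^{2\pi i (a_1 n^k + b n)/q}\right|$. -/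
/-!
Write the summand as `e^{iθn} f(n)` with `θ = y - 2πb/q` and `f(n) = e(2π(a₁n^k + bn)/q)`.
Partial summation against the unimodular factor `e^{iθn}`, whose consecutive differences have
norm at most `|θ| ≤ V`, changes the sum by at most `N V W`. Since `f` factors through `ZMod q`
it is `q`-periodic, so its sum splits into `⌊N/q⌋` complete periods, each equal to the sum over
`1, …, q`, and an incomplete tail of length `< q` bounded by `W'`.
-/

open Finset

theorem Finset.sum_Ioc_consecutive' {α M : Type*} [LinearOrder α] [LocallyFiniteOrder α]
    [AddCommMonoid M] (f : α → M) {a b c : α} (hab : a ≤ b) (hbc : b ≤ c) :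
    ∑ i ∈ Ioc a b, f i + ∑ i ∈ Ioc b c, f i = ∑ i ∈ Ioc a c, f i := by
  rw [← sum_union (Ioc_disjoint_Ioc_of_le le_rfl), Ioc_union_Ioc_eq_Ioc hab hbc]

namespace Function.Periodic

variable {q : ℕ}

theorem sum_Ioc_add_period_eq {M : Type*} [AddCommGroup M] {f : ℤ → M} (hf : Periodic f q)
    (m : ℤ) : ∑ i ∈ Ioc m (m + q), f i = ∑ i ∈ Ioc 0 (q : ℤ), f i := by
  -- Sliding the window by one drops `f (m + 1)` and adds `f (m + q + 1) = f (m + 1)`.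
  have hshift : Periodic (fun m : ℤ => ∑ i ∈ Ioc m (m + q), f i) 1 := fun m => by
    have h := congrArg (∑ i ∈ ·, f i)
      ((insert_Ioc_right_eq_Ioc_add_one (by omega : m ≤ m + q)).trans
        (insert_Ioc_add_one_left_eq_Ioc (by omega : m < m + q + 1)).symm)
    rw [sum_insert (by simp), sum_insert (by simp), add_right_comm m, hf] at h
    exact (add_left_cancel h).symm
  simpa using hshift.int_mul_eq m

theorem sum_Ioc_add_nsmul_period_eq {M : Type*} [AddCommGroup M] {f : ℤ → M}
    (hf : Periodic f q) (m : ℤ) (r : ℕ) :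
    ∑ i ∈ Ioc m (m + r * q), f i = r • ∑ i ∈ Ioc 0 (q : ℤ), f i := by
  induction r with
  | zero => simp
  | succ r ih =>
    have hq : (0 : ℤ) ≤ q := Int.natCast_nonneg q
    rw [← sum_Ioc_consecutive' f (b := m + r * q) (by nlinarith) (by push_cast; nlinarith), ih,
      show m + ((r + 1 : ℕ) : ℤ) * q = m + r * q + q by push_cast; ring,
      hf.sum_Ioc_add_period_eq, succ_nsmul]

theorem norm_nsmul_sum_Ioc_period_sub_le {E : Type*} [NormedAddCommGroup E] [NormedSpace ℝ E]
    {f : ℤ → E} (hf : Periodic f q) {m n : ℤ} (r : ℕ) (hn : m + r * q ≤ n) :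
    r * ‖∑ i ∈ Ioc 0 (q : ℤ), f i‖ - ‖∑ i ∈ Ioc (m + r * q) n, f i‖ ≤ ‖∑ i ∈ Ioc m n, f i‖ := by
  have hq : (0 : ℤ) ≤ q := Int.natCast_nonneg q
  rw [← sum_Ioc_consecutive' f (a := m) (by nlinarith) hn, hf.sum_Ioc_add_nsmul_period_eq]
  simpa only [RCLike.norm_nsmul ℝ, nsmul_eq_mul] using
    norm_sub_le_norm_add (r • ∑ i ∈ Ioc 0 (q : ℤ), f i) (∑ i ∈ Ioc (m + r * q) n, f i)

theorem floor_div_mul_norm_sum_Ioc_sub_le {E : Type*} [NormedAddCommGroup E] [NormedSpace ℝ E]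
    {f : ℤ → E} (hf : Periodic f q) (hq : 0 < q) {M N W' : ℝ} (hN : 0 ≤ N)
    (hW' : ∀ u : ℝ, 0 ≤ u → u < q →
      ‖∑ n ∈ Icc (⌊M + (⌊N / (q : ℝ)⌋ : ℝ) * q⌋ + 1) ⌊M + (⌊N / (q : ℝ)⌋ : ℝ) * q + u⌋, f n‖
        ≤ W') :
    (⌊N / (q : ℝ)⌋ : ℝ) * ‖∑ n ∈ Ioc 0 (q : ℤ), f n‖ - W' ≤ ‖∑ n ∈ Ioc ⌊M⌋ ⌊M + N⌋, f n‖ := by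
  have hq₀ : (0 : ℝ) < q := by exact_mod_cast hq
  obtain ⟨r, hr⟩ := Int.eq_ofNat_of_zero_le (Int.floor_nonneg.2 (by positivity : 0 ≤ N / q))
  rw [hr, Int.cast_natCast] at hW' ⊢
  have hrN : (r : ℝ) * q ≤ N ∧ N < r * q + q := by
    have h₁ := Int.floor_le (N / q)
    have h₂ := Int.lt_floor_add_one (N / q)
    rw [hr, Int.cast_natCast] at h₁ h₂
    exact ⟨(le_div_iff₀ hq₀).1 h₁, by linarith [(div_lt_iff₀ hq₀).1 h₂]⟩
  have hfloor : ⌊M + (r : ℝ) * q⌋ = ⌊M⌋ + r * q := by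
    rw [show M + (r : ℝ) * q = M + ((r * q : ℤ) : ℝ) by push_cast; ring, Int.floor_add_intCast]
  have htail := hW' (N - r * q) (by linarith) (by linarith)
  rw [add_add_sub_cancel, Icc_add_one_left_eq_Ioc, hfloor] at htail
  have hblocks := hf.norm_nsmul_sum_Ioc_period_sub_le (m := ⌊M⌋) (n := ⌊M + N⌋) r
    (hfloor ▸ Int.floor_le_floor (by linarith))
  linarith

end Function.Periodic

theorem norm_sum_Ioc_mul_sub_mul_sum_le {R : Type*} [NormedRing R] {g f : ℤ → R} {V W : ℝ}
    (hg : ∀ n, ‖g (n + 1) - g n‖ ≤ V) {a b : ℤ} (hab : a < b)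
    (hS : ∀ n, a < n → n < b → ‖∑ i ∈ Ioc a n, f i‖ ≤ W) :
    ‖∑ i ∈ Ioc a b, g i * f i - g b * ∑ i ∈ Ioc a b, f i‖ ≤ (b - a - 1) * (V * W) := by
  induction b, (hab : a + 1 ≤ b) using Int.leInduction with
  | base => rw [← insert_Ioc_right_eq_Ioc_add_one le_rfl]; simp
  | succ b hb ih =>
    have hstep : ∑ i ∈ Ioc a (b + 1), g i * f i - g (b + 1) * ∑ i ∈ Ioc a (b + 1), f i
        = (∑ i ∈ Ioc a b, g i * f i - g b * ∑ i ∈ Ioc a b, f i)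
          - (g (b + 1) - g b) * ∑ i ∈ Ioc a b, f i := by
      rw [← insert_Ioc_right_eq_Ioc_add_one (by omega), sum_insert (by simp), sum_insert (by simp)]
      noncomm_ring
    have hdiff : ‖(g (b + 1) - g b) * ∑ i ∈ Ioc a b, f i‖ ≤ V * W :=
      (norm_mul_le _ _).trans (mul_le_mul (hg b) (hS b (by omega) (by omega)) (norm_nonneg _)
        ((norm_nonneg _).trans (hg b)))
    calc _ ≤ _ := hstep ▸ norm_sub_le _ _
      _ ≤ (b - a - 1) * (V * W) + V * W :=
          add_le_add (ih fun n h₁ h₂ => hS n h₁ (by omega)) hdiff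
      _ = _ := by push_cast; ring

theorem norm_sum_Ioc_sub_le_norm_sum_Ioc_exp_mul (θ : ℝ) {f : ℤ → ℂ} {W : ℝ} {a b : ℤ}
    (hab : a < b) (hS : ∀ n, a < n → n < b → ‖∑ i ∈ Ioc a n, f i‖ ≤ W) :
    ‖∑ i ∈ Ioc a b, f i‖ - (b - a - 1) * (|θ| * W)
      ≤ ‖∑ i ∈ Ioc a b, Complex.exp (Complex.I * ↑(θ * i)) * f i‖ := by
  set g : ℤ → ℂ := fun n => Complex.exp (Complex.I * ↑(θ * n))
  have hg_norm : ∀ n, ‖g n‖ = 1 := fun n => by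
    simpa [g, mul_comm Complex.I] using Complex.norm_exp_ofReal_mul_I (θ * n)
  have hg : ∀ n, ‖g (n + 1) - g n‖ ≤ |θ| := fun n => by
    have : g (n + 1) - g n = g n * (Complex.exp (Complex.I * θ) - 1) := by
      simp only [g, mul_sub, ← Complex.exp_add]; push_cast; ring_nf
    rw [this, norm_mul, hg_norm, one_mul, ← Real.norm_eq_abs]
    exact Real.norm_exp_I_mul_ofReal_sub_one_le
  have habel := norm_sum_Ioc_mul_sub_mul_sum_le hg hab hS
  have := norm_sub_norm_le (g b * ∑ i ∈ Ioc a b, f i) (∑ i ∈ Ioc a b, g i * f i)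
  rw [norm_mul, hg_norm, one_mul, norm_sub_rev] at this
  linarith

theorem norm_sum_Ioc_floor_sub_le_norm_sum_exp_mul {θ V M N W : ℝ} {f : ℤ → ℂ} (hθ : |θ| ≤ V)
    (hN : 1 ≤ N) (hW : ∀ u ∈ Set.Icc (0 : ℝ) N, ‖∑ n ∈ Icc (⌊M⌋ + 1) ⌊M + u⌋, f n‖ ≤ W) :
    ‖∑ n ∈ Ioc ⌊M⌋ ⌊M + N⌋, f n‖ - N * V * W
      ≤ ‖∑ n ∈ Ioc ⌊M⌋ ⌊M + N⌋, Complex.exp (Complex.I * ↑(θ * n)) * f n‖ := by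
  have hfloorN : (⌊M + N⌋ : ℝ) ≤ M + N := Int.floor_le _
  have hfloorM : M < ⌊M⌋ + 1 := Int.lt_floor_add_one M
  have hW₀ : 0 ≤ W := (norm_nonneg _).trans (hW 0 ⟨le_rfl, by linarith⟩)
  have hab : ⌊M⌋ < ⌊M + N⌋ := by
    rw [Int.lt_iff_add_one_le, ← Int.floor_add_one]; exact Int.floor_le_floor (by linarith)
  have habel := norm_sum_Ioc_sub_le_norm_sum_Ioc_exp_mul θ hab (W := W) fun n h₁ h₂ => by
    have hn : (n : ℝ) + 1 ≤ ⌊M + N⌋ := by exact_mod_cast h₂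
    have := hW (n - ⌊M⌋) ⟨by rw [sub_nonneg]; exact_mod_cast h₁.le, by linarith⟩
    rwa [← Int.cast_sub, Int.floor_add_intCast, add_sub_cancel, Icc_add_one_left_eq_Ioc] at this
  have hlength : ((⌊M + N⌋ : ℝ) - ⌊M⌋ - 1) * (|θ| * W) ≤ N * V * W := by
    rw [mul_assoc]
    exact mul_le_mul (by linarith) (mul_le_mul_of_nonneg_right hθ hW₀) (by positivity)
      (by linarith)
  linarith

theorem exp_I_mul_two_pi_mul_intCast_div_eq_stdAddChar (q : ℕ) [NeZero q] (z : ℤ) :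
    Complex.exp (Complex.I * ↑(2 * Real.pi * (z : ℝ) / q)) = ZMod.stdAddChar (z : ZMod q) := by
  rw [ZMod.stdAddChar_coe]
  push_cast
  ring_nf

theorem periodic_exp_I_mul_two_pi_mul_poly_div (q k : ℕ) (a₁ b : ℤ) :
    Function.Periodic (fun n : ℤ => Complex.exp (Complex.I * Complex.ofReal
      (2 * Real.pi * ((a₁ : ℝ) * (n : ℝ) ^ k + (b : ℝ) * (n : ℝ)) / (q : ℝ)))) q := by
  rcases eq_or_ne q 0 with rfl | hq
  · simp [Function.Periodic]
  have : NeZero q := ⟨hq⟩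
  intro n
  have h : ∀ n : ℤ, 2 * Real.pi * ((a₁ : ℝ) * (n : ℝ) ^ k + (b : ℝ) * (n : ℝ)) / (q : ℝ)
      = 2 * Real.pi * ((a₁ * n ^ k + b * n : ℤ) : ℝ) / q := fun n => by push_cast; ring
  simp only [h, exp_I_mul_two_pi_mul_intCast_div_eq_stdAddChar]
  push_cast
  rw [ZMod.natCast_self, add_zero]

theorem sum_rational_top_coefficient_lower_bound_general
    (q k : ℕ) (hq : 2 ≤ q) (a₁ b : ℤ)
    (y V M N W W' : ℝ)
    (hy : |y - 2 * Real.pi * (b : ℝ) / (q : ℝ)| ≤ V) (hN : 1 ≤ N)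
    (hW : ∀ u ∈ Set.Icc (0 : ℝ) N,
      ‖∑ n ∈ Finset.Icc (⌊M⌋ + 1) ⌊M + u⌋,
        Complex.exp (Complex.I * Complex.ofReal
          (2 * Real.pi * ((a₁ : ℝ) * (n : ℝ) ^ k + (b : ℝ) * (n : ℝ)) / (q : ℝ)))‖ ≤ W)
    (hW' : ∀ u : ℝ, 0 ≤ u → u < (q : ℝ) →
      ‖∑ n ∈ Finset.Icc (⌊M + (⌊N / (q : ℝ)⌋ : ℝ) * (q : ℝ)⌋ + 1)
              ⌊M + (⌊N / (q : ℝ)⌋ : ℝ) * (q : ℝ) + u⌋,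
        Complex.exp (Complex.I * Complex.ofReal
          (2 * Real.pi * ((a₁ : ℝ) * (n : ℝ) ^ k + (b : ℝ) * (n : ℝ)) / (q : ℝ)))‖ ≤ W') :
    (⌊N / (q : ℝ)⌋ : ℝ) *
        ‖∑ n ∈ Finset.Icc (1 : ℤ) (q : ℤ),
          Complex.exp (Complex.I * Complex.ofReal
            (2 * Real.pi * ((a₁ : ℝ) * (n : ℝ) ^ k + (b : ℝ) * (n : ℝ)) / (q : ℝ)))‖
      - N * V * W - W'
    ≤ ‖∑ n ∈ Finset.Icc (⌊M⌋ + 1) ⌊M + N⌋,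
        Complex.exp (Complex.I * Complex.ofReal
          (2 * Real.pi * (a₁ : ℝ) * (n : ℝ) ^ k / (q : ℝ) + y * (n : ℝ)))‖ := by
  have hsummand : ∀ n : ℤ, Complex.exp (Complex.I * Complex.ofReal
      (2 * Real.pi * (a₁ : ℝ) * (n : ℝ) ^ k / (q : ℝ) + y * (n : ℝ))) =
      Complex.exp (Complex.I * ↑((y - 2 * Real.pi * (b : ℝ) / (q : ℝ)) * n)) *
        Complex.exp (Complex.I * Complex.ofReal
          (2 * Real.pi * ((a₁ : ℝ) * (n : ℝ) ^ k + (b : ℝ) * (n : ℝ)) / (q : ℝ))) := fun n => by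
    rw [← Complex.exp_add, ← mul_add, ← Complex.ofReal_add]
    congr 3
    field_simp
    ring
  have hrational := (periodic_exp_I_mul_two_pi_mul_poly_div q k a₁ b
    ).floor_div_mul_norm_sum_Ioc_sub_le (by omega) (by linarith) hW'
  have htwist := norm_sum_Ioc_floor_sub_le_norm_sum_exp_mul hy hN hW
  rw [show Icc (1 : ℤ) q = Ioc 0 (q : ℤ) by rw [← Icc_add_one_left_eq_Ioc, zero_add],
    Icc_add_one_left_eq_Ioc, sum_congr rfl fun n _ => hsummand n]
  linarith

/-- Approximation of an exponential sum with rational top coefficient: if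
`P(n) = 2πa₁n^k/q + yn` with `|y − 2πb/q| ≤ V`, the partial sums of
`e(2π(a₁n^k+bn)/q)` over intervals of length `≤ N` are bounded by `W`, and all its
incomplete sums of length `< q` (starting at `M + ⌊N/q⌋q`) are bounded by `W'`, then
`|∑_{M<n≤M+N} e^{iP(n)}| ≥ ⌊N/q⌋|∑_{n=1}^q e(2π(a₁n^k+bn)/q)| − NVW − W'`. -/
theorem sum_rational_top_coefficient_lower_bound
    (q k : ℕ) (hq : 2 ≤ q) (hk : 2 ≤ k) (a₁ b : ℤ)
    (y V M N W W' : ℝ) (hV : 0 ≤ V)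
    (hy : |y - 2 * Real.pi * (b : ℝ) / (q : ℝ)| ≤ V) (hN : 1 ≤ N)
    (hW : ∀ u ∈ Set.Icc (0 : ℝ) N,
      ‖∑ n ∈ Finset.Icc (⌊M⌋ + 1) ⌊M + u⌋,
        Complex.exp (Complex.I * Complex.ofReal
          (2 * Real.pi * ((a₁ : ℝ) * (n : ℝ) ^ k + (b : ℝ) * (n : ℝ)) / (q : ℝ)))‖ ≤ W)
    (hW' : ∀ u : ℝ, 0 ≤ u → u < (q : ℝ) →
      ‖∑ n ∈ Finset.Icc (⌊M + (⌊N / (q : ℝ)⌋ : ℝ) * (q : ℝ)⌋ + 1)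
              ⌊M + (⌊N / (q : ℝ)⌋ : ℝ) * (q : ℝ) + u⌋,
        Complex.exp (Complex.I * Complex.ofReal
          (2 * Real.pi * ((a₁ : ℝ) * (n : ℝ) ^ k + (b : ℝ) * (n : ℝ)) / (q : ℝ)))‖ ≤ W') :
    (⌊N / (q : ℝ)⌋ : ℝ) *
        ‖∑ n ∈ Finset.Icc (1 : ℤ) (q : ℤ),
          Complex.exp (Complex.I * Complex.ofReal
            (2 * Real.pi * ((a₁ : ℝ) * (n : ℝ) ^ k + (b : ℝ) * (n : ℝ)) / (q : ℝ)))‖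
      - N * V * W - W'
    ≤ ‖∑ n ∈ Finset.Icc (⌊M⌋ + 1) ⌊M + N⌋,
        Complex.exp (Complex.I * Complex.ofReal
          (2 * Real.pi * (a₁ : ℝ) * (n : ℝ) ^ k / (q : ℝ) + y * (n : ℝ)))‖ :=
  sum_rational_top_coefficient_lower_bound_general q k hq a₁ b y V M N W W' hy hN hW hW'
end

section
/- Fix a constant $c \in (0,1)$ and an integer $n \geq 1$. Let $Q \geq 2$ and suppose $\mathcal{P}$ is a set of primes in $[Q/2, Q]$ with $|\mathcal{P}| \geq c\, Q/\log Q$. For each $q \in \mathcal{P}$, let $\mathcal{G}(q) \subseteq \{1,\ldots,q\}^n$ with $|\mathcal{G}(q)| \geq c\, q^n$, and let $I_{q,\underline{a}} \subseteq \mathbb{R}^n$ be the axis-parallel box centered at $(2\pi a_1/q, \ldots, 2\pi a_n/q)$ with side-lengths $h_1(q)$ in the first coordinate and $h_2(q)$ in the rest, where $c\, q^{-1} \leq h_1(q) \leq q^{-1}$ and $c\, q^{-1-1/(n-1)} \leq h_2(q) \leq q^{-1-1/(n-1)}$ (for $n \geq 2$). Then $\left|\bigcup_{q \in \mathcal{P}}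 \bigcup_{\underline{a} \in \mathcal{G}(q)} I_{q,\underline{a}}\right| \geq c'\, (\log Q)^{-1}$ for a constant $c' > 0$ depending only on $n$ and $c$. -/
/-!
Write `A_q` for the union of the boxes with denominator `q`. Boxes with the same `q` are disjoint,
since their sides are shorter than the spacing `2π/q` of the centres, so `|A_q| ≫ c^{n+1}/Q`. For
distinct primes `q ≠ q'`, a pair of intersecting boxes `(a, a')` is determined by the integer vector
`a q' - a' q`, which is small in every coordinate; counting these vectors gives
`|A_q ∩ A_q'| ≪ Q^{-2}`. The second moment (Cauchy–Schwarz) inequality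
`(∑ |A_q|)^2 ≤ |⋃ A_q| ∑_{q,q'} |A_q ∩ A_q'|` then yields `|⋃ A_q| ≫ |P| / Q ≫ 1 / log Q`.
-/

open MeasureTheory Finset Real Function

/-- `x ↦ x ^ 2 / (x + B)` is increasing on `x ≥ 0`. -/
theorem sq_le_mul_add_of_le {a S M B : ℝ} (ha : 0 ≤ a) (haS : a ≤ S) (hB : 0 ≤ B)
    (h : S ^ 2 ≤ M * (S + B)) : a ^ 2 ≤ M * (a + B) := by
  have key : a ^ 2 * (S + B) ≤ M * (a + B) * (S + B) := by
    nlinarith [mul_nonneg (mul_nonneg ha (ha.trans haS)) (sub_nonneg.2 haS),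
      mul_nonneg hB (mul_nonneg (sub_nonneg.2 haS) (add_nonneg (ha.trans haS) ha))]
  rcases (add_nonneg (ha.trans haS) hB).eq_or_lt with h0 | h0
  · obtain rfl : a = 0 := by linarith
    obtain rfl : B = 0 := by linarith
    simp
  · exact le_of_mul_le_mul_right key h0

section SecondMoment

variable {α ι : Type*} [MeasurableSpace α] (μ : Measure α) {A : ι → Set α} {s : Finset ι}

theorem lintegral_sum_indicator_one (hA : ∀ i ∈ s, MeasurableSet (A i)) :
    ∫⁻ x, ∑ i ∈ s, (A i).indicator 1 x ∂μ = ∑ i ∈ s, μ (A i) := by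
  rw [lintegral_finsetSum' _ fun i hi => (measurable_one.indicator (hA i hi)).aemeasurable]
  exact sum_congr rfl fun i hi => lintegral_indicator_one (hA i hi)

theorem sq_sum_measure_le_measure_biUnion_mul (hA : ∀ i ∈ s, MeasurableSet (A i)) :
    (∑ i ∈ s, μ (A i)) ^ 2 ≤ μ (⋃ i ∈ s, A i) * ∑ i ∈ s, ∑ j ∈ s, μ (A i ∩ A j) := by
  set U := ⋃ i ∈ s, A i
  set F : α → ENNReal := fun x => ∑ i ∈ s, (A i).indicator 1 x
  have hAA : ∀ i ∈ s, ∀ j ∈ s, MeasurableSet (A i ∩ A j) := fun i hi j hj =>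
    (hA i hi).inter (hA j hj)
  have hF2 : ∫⁻ x, F x ^ 2 ∂μ = ∑ i ∈ s, ∑ j ∈ s, μ (A i ∩ A j) := by
    have hF2x : ∀ x, F x ^ 2 = ∑ i ∈ s, ∑ j ∈ s, (A i ∩ A j).indicator 1 x := fun x => by
      simp only [F, sq, sum_mul_sum, Set.inter_indicator_one, Pi.mul_apply]
    simp_rw [hF2x]
    rw [lintegral_finsetSum' _ fun i hi => (Finset.measurable_sum _ fun j hj =>
      measurable_one.indicator (hAA i hi j hj)).aemeasurable]
    exact sum_congr rfl fun i hi => lintegral_sum_indicator_one μ (hAA i hi)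
  -- Cauchy–Schwarz, as Hölder with exponents `1/2, 1/2` applied to `1_U` and `F ^ 2`
  have hFU : ∀ x, F x = U.indicator 1 x ^ (1 / 2 : ℝ) * (F x ^ 2) ^ (1 / 2 : ℝ) := by
    intro x
    rw [← ENNReal.rpow_natCast, ← ENNReal.rpow_mul]
    by_cases hx : x ∈ U
    · simp [hx]
    · have : F x = 0 := by
        refine sum_eq_zero fun i hi => Set.indicator_of_notMem (fun hxi => hx ?_) _
        exact Set.mem_biUnion hi hxi
      simp [this]
  have hU : MeasurableSet U := s.measurableSet_biUnion hA
  have hFm : Measurable F := Finset.measurable_sum _ fun i hi => measurable_one.indicator (hA i hi)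
  have holder : ∫⁻ x, U.indicator 1 x ^ (1 / 2 : ℝ) * (F x ^ 2) ^ (1 / 2 : ℝ) ∂μ ≤
      (∫⁻ x, U.indicator 1 x ∂μ) ^ (1 / 2 : ℝ) * (∫⁻ x, F x ^ 2 ∂μ) ^ (1 / 2 : ℝ) :=
    ENNReal.lintegral_mul_norm_pow_le (measurable_one.indicator hU).aemeasurable
      (hFm.pow_const 2).aemeasurable (by norm_num) (by norm_num) (by norm_num)
  simp_rw [← hFU, lintegral_indicator_one hU, hF2] at holder
  rw [show ∫⁻ x, F x ∂μ = _ from lintegral_sum_indicator_one μ hA] at holder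
  calc (∑ i ∈ s, μ (A i)) ^ 2
      ≤ (μ U ^ (1 / 2 : ℝ) * (∑ i ∈ s, ∑ j ∈ s, μ (A i ∩ A j)) ^ (1 / 2 : ℝ)) ^ 2 := by gcongr
    _ = μ U * ∑ i ∈ s, ∑ j ∈ s, μ (A i ∩ A j) := by
      rw [mul_pow, ← ENNReal.rpow_natCast, ← ENNReal.rpow_natCast, ← ENNReal.rpow_mul,
        ← ENNReal.rpow_mul]
      norm_num

theorem sq_card_mul_le_measureReal_biUnion_mul {m ε : ℝ} (hA : ∀ i ∈ s, MeasurableSet (A i))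
    (hfin : ∀ i ∈ s, μ (A i) ≠ ⊤) (hm0 : 0 ≤ m) (hm : ∀ i ∈ s, m ≤ μ.real (A i)) (hε0 : 0 ≤ ε)
    (hε : ∀ i ∈ s, ∀ j ∈ s, i ≠ j → μ.real (A i ∩ A j) ≤ ε) :
    (#s * m) ^ 2 ≤ μ.real (⋃ i ∈ s, A i) * (#s * m + #s ^ 2 * ε) := by
  classical
  have hinter : ∀ i ∈ s, ∀ j, μ (A i ∩ A j) ≠ ⊤ := fun i hi j =>
    measure_ne_top_of_subset Set.inter_subset_left (hfin i hi)
  have hU : μ (⋃ i ∈ s, A i) ≠ ⊤ :=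
    (measure_biUnion_lt_top s.finite_toSet fun i hi => (hfin i hi).lt_top).ne
  set S := ∑ i ∈ s, μ.real (A i)
  set M := μ.real (⋃ i ∈ s, A i)
  have hCS : S ^ 2 ≤ M * ∑ i ∈ s, ∑ j ∈ s, μ.real (A i ∩ A j) := by
    have h := ENNReal.toReal_mono (ENNReal.mul_ne_top hU (ENNReal.sum_ne_top.2 fun i hi =>
      ENNReal.sum_ne_top.2 fun j _ => hinter i hi j)) (sq_sum_measure_le_measure_biUnion_mul μ hA)
    rwa [ENNReal.toReal_mul, ENNReal.toReal_pow, ENNReal.toReal_sum fun i hi => hfin i hi,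
      ENNReal.toReal_sum fun i hi => ENNReal.sum_ne_top.2 fun j _ => hinter i hi j,
      sum_congr rfl fun i hi => ENNReal.toReal_sum fun j _ => hinter i hi j] at h
  have hoff : ∑ i ∈ s, ∑ j ∈ s, μ.real (A i ∩ A j) ≤ S + #s ^ 2 * ε := by
    calc ∑ i ∈ s, ∑ j ∈ s, μ.real (A i ∩ A j)
        = ∑ i ∈ s, (μ.real (A i) + ∑ j ∈ s.erase i, μ.real (A i ∩ A j)) := by
          refine sum_congr rfl fun i hi => ?_
          rw [← add_sum_erase s _ hi, Set.inter_self]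
      _ ≤ ∑ i ∈ s, (μ.real (A i) + #s * ε) := by
          gcongr with i hi
          calc ∑ j ∈ s.erase i, μ.real (A i ∩ A j) ≤ #(s.erase i) * ε := by
                simpa using sum_le_card_nsmul _ _ _ fun j hj =>
                  hε i hi j (mem_of_mem_erase hj) (ne_of_mem_erase hj).symm
            _ ≤ #s * ε := by gcongr; exact erase_subset i s
      _ = S + #s ^ 2 * ε := by rw [sum_add_distrib, sum_const, nsmul_eq_mul, sq, mul_assoc]
  have hSm : #s * m ≤ S := by simpa using card_nsmul_le_sum s _ m hm
  exact sq_le_mul_add_of_le (by positivity) hSm (by positivity)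
    (hCS.trans (mul_le_mul_of_nonneg_left hoff measureReal_nonneg))

end SecondMoment

namespace RationalBoxes

variable {ι : Type*}

def box (z w : ι → ℝ) : Set (ι → ℝ) := {x | ∀ i, |x i - z i| ≤ w i / 2}

theorem box_eq_pi (z w : ι → ℝ) :
    box z w = Set.univ.pi fun i => Set.Icc (z i - w i / 2) (z i + w i / 2) := by
  ext x
  simp only [box, Set.mem_ofPred_eq, Set.mem_pi, Set.mem_univ, true_implies, Set.mem_Icc,
    abs_sub_le_iff]
  refine forall_congr' fun i => ?_
  constructor <;> rintro ⟨h₁, h₂⟩ <;> constructor <;> linarith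

theorem measurableSet_box [Fintype ι] (z w : ι → ℝ) : MeasurableSet (box z w) := by
  rw [box_eq_pi]
  exact MeasurableSet.univ_pi fun _ => measurableSet_Icc

theorem volume_box [Fintype ι] (z : ι → ℝ) {w : ι → ℝ} (hw : ∀ i, 0 ≤ w i) :
    volume (box z w) = ENNReal.ofReal (∏ i, w i) := by
  rw [box_eq_pi, volume_pi_pi, ENNReal.ofReal_prod_of_nonneg fun i _ => hw i]
  simp_rw [Real.volume_Icc]
  ring_nf

theorem measureReal_box [Fintype ι] (z : ι → ℝ) {w : ι → ℝ} (hw : ∀ i, 0 ≤ w i) :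
    volume.real (box z w) = ∏ i, w i := by
  rw [measureReal_def, volume_box z hw, ENNReal.toReal_ofReal (prod_nonneg fun i _ => hw i)]

theorem abs_sub_le_of_mem_box {z z' w w' x : ι → ℝ} (hx : x ∈ box z w) (hx' : x ∈ box z' w')
    (i : ι) : |z i - z' i| ≤ (w i + w' i) / 2 := by
  calc |z i - z' i| ≤ |x i - z i| + |x i - z' i| := by
        rw [abs_sub_comm (x i)]; exact abs_sub_le _ _ _
    _ ≤ (w i + w' i) / 2 := by linarith [hx i, hx' i]

noncomputable def rationalCenter (q : ℕ) (a : ι → ℕ) : ι → ℝ := fun i => 2 * π * a i / q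

def boxUnion (q : ℕ) (G : Finset (ι → ℕ)) (w : ι → ℝ) : Set (ι → ℝ) :=
  ⋃ a ∈ G, box (rationalCenter q a) w

theorem measurableSet_boxUnion [Fintype ι] (q : ℕ) (G : Finset (ι → ℕ)) (w : ι → ℝ) :
    MeasurableSet (boxUnion q G w) :=
  G.measurableSet_biUnion fun _ _ => measurableSet_box _ _

theorem volume_boxUnion_ne_top [Fintype ι] (q : ℕ) (G : Finset (ι → ℕ)) {w : ι → ℝ}
    (hw : ∀ i, 0 ≤ w i) : volume (boxUnion q G w) ≠ ⊤ :=
  (measure_biUnion_lt_top G.finite_toSet fun a _ => by simp [volume_box _ hw]).ne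

theorem pairwise_disjoint_box_rationalCenter {q : ℕ} {w : ι → ℝ} (hw : ∀ i, w i < 2 * π / q) :
    Pairwise (Disjoint on fun a => box (rationalCenter q a) w) := by
  intro a b hab
  obtain ⟨i, hi⟩ := Function.ne_iff.1 hab
  refine Set.disjoint_left.2 fun x hxa hxb => ?_
  have h1 : (1 : ℝ) ≤ |(a i : ℝ) - b i| := by
    exact_mod_cast Int.one_le_abs (sub_ne_zero.2 (Int.natCast_inj.not.2 hi))
  have h2 : 2 * π / q ≤ |rationalCenter q a i - rationalCenter q b i| := by
    rw [rationalCenter, rationalCenter, ← sub_div, ← mul_sub, abs_div, abs_mul, Nat.abs_cast,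
      abs_of_pos (by positivity : 0 < 2 * π)]
    exact div_le_div_of_nonneg_right (le_mul_of_one_le_right (by positivity) h1) q.cast_nonneg
  linarith [abs_sub_le_of_mem_box hxa hxb i, hw i]

theorem measureReal_boxUnion [Fintype ι] {q : ℕ} (G : Finset (ι → ℕ)) {w : ι → ℝ}
    (hw0 : ∀ i, 0 ≤ w i) (hw : ∀ i, w i < 2 * π / q) :
    volume.real (boxUnion q G w) = #G * ∏ i, w i := by
  rw [boxUnion, measureReal_biUnion_finset
    (fun a _ b _ hab => pairwise_disjoint_box_rationalCenter hw hab)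
    (fun a _ => measurableSet_box _ _) (fun a _ => by simp [volume_box _ hw0])]
  simp [measureReal_box _ hw0]

theorem abs_mul_sub_mul_le_of_mem_box {q q' : ℕ} (hq : 0 < q) (hq' : 0 < q') {a a' : ι → ℕ}
    {w w' x : ι → ℝ} (hx : x ∈ box (rationalCenter q a) w) (hx' : x ∈ box (rationalCenter q' a') w')
    (i : ι) : |(((a i * q' - a' i * q : ℤ)) : ℝ)| ≤ q * q' * (w i + w' i) / (4 * π) := by
  have hqq' : (0 : ℝ) < q * q' := by positivity
  have h := abs_sub_le_of_mem_box hx hx' i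
  rw [rationalCenter, rationalCenter, div_sub_div _ _ (by positivity) (by positivity), abs_div,
    abs_of_pos hqq'] at h
  rw [le_div_iff₀ (by positivity)]
  push_cast
  calc |(a i * q' - a' i * q : ℝ)| * (4 * π) = 2 * |2 * π * a i * q' - q * (2 * π * a' i)| := by
        rw [show 2 * π * a i * q' - q * (2 * π * a' i) = (2 * π) * (a i * q' - a' i * q) by ring,
          abs_mul, abs_of_pos (by positivity : 0 < 2 * π)]
        ring
    _ ≤ q * q' * (w i + w' i) := by
        rw [div_le_iff₀ hqq'] at h
        linarith

theorem eq_and_eq_of_mul_sub_mul_eq {q q' a b a' b' : ℕ} (hqq' : q.Coprime q')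
    (ha : 1 ≤ a ∧ a ≤ q) (hb : 1 ≤ b ∧ b ≤ q) (h : (a * q' - a' * q : ℤ) = b * q' - b' * q) :
    a = b ∧ a' = b' := by
  have hdvd : (q : ℤ) ∣ (a - b) * q' := ⟨a' - b', by linarith⟩
  have hq : (q : ℤ) ∣ a - b := (Nat.isCoprime_iff_coprime.2 hqq').dvd_of_dvd_mul_right hdvd
  obtain rfl : a = b := by
    have := Int.eq_zero_of_abs_lt_dvd hq (by rw [abs_lt]; omega)
    omega
  have : (a' : ℤ) * q = b' * q := by linarith
  exact ⟨rfl, by exact_mod_cast mul_right_cancel₀ (by omega : (q : ℤ) ≠ 0) this⟩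

theorem card_piFinset_Icc_floor_le [Fintype ι] [DecidableEq ι] {R : ι → ℝ} (hR : ∀ i, 0 ≤ R i) :
    (#(Fintype.piFinset fun i => Icc (-⌊R i⌋) ⌊R i⌋) : ℝ) ≤ ∏ i, (2 * R i + 1) := by
  rw [Fintype.card_piFinset, Nat.cast_prod]
  refine prod_le_prod (fun i _ => Nat.cast_nonneg _) fun i _ => ?_
  have hfloor : 0 ≤ ⌊R i⌋ := Int.floor_nonneg.2 (hR i)
  rw [Int.card_Icc, show ⌊R i⌋ + 1 - -⌊R i⌋ = 2 * ⌊R i⌋ + 1 by ring]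
  have : ((2 * ⌊R i⌋ + 1).toNat : ℝ) = 2 * ⌊R i⌋ + 1 := by
    exact_mod_cast Int.toNat_of_nonneg (by omega)
  linarith [Int.floor_le (R i)]

theorem card_le_of_forall_inter_nonempty [Fintype ι] {q q' : ℕ} (hq : 0 < q) (hq' : 0 < q')
    (hqq' : q.Coprime q') {G : Finset (ι → ℕ)} (hG : ∀ a ∈ G, ∀ i, 1 ≤ a i ∧ a i ≤ q)
    {w w' : ι → ℝ} (hw : ∀ i, 0 ≤ w i + w' i) {S : Finset ((ι → ℕ) × (ι → ℕ))}
    (hS : ∀ p ∈ S,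
      p.1 ∈ G ∧ (box (rationalCenter q p.1) w ∩ box (rationalCenter q' p.2) w').Nonempty) :
    (#S : ℝ) ≤ ∏ i, (q * q' * (w i + w' i) / (2 * π) + 1) := by
  classical
  set R : ι → ℝ := fun i => q * q' * (w i + w' i) / (4 * π)
  have hmaps : Set.MapsTo (fun (p : (ι → ℕ) × (ι → ℕ)) i => (p.1 i * q' - p.2 i * q : ℤ)) S
      (Fintype.piFinset fun i => Icc (-⌊R i⌋) ⌊R i⌋) := by
    intro p hp
    obtain ⟨-, x, hx, hx'⟩ := hS p hp
    refine Fintype.mem_piFinset.2 fun i => Finset.mem_Icc.2 ?_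
    obtain ⟨h₁, h₂⟩ := abs_le.1 (abs_mul_sub_mul_le_of_mem_box hq hq' hx hx' i)
    exact ⟨neg_le.1 (Int.le_floor.2 (by push_cast at h₁ ⊢; linarith)), Int.le_floor.2 h₂⟩
  have hinj : Set.InjOn (fun (p : (ι → ℕ) × (ι → ℕ)) i => (p.1 i * q' - p.2 i * q : ℤ)) S := by
    rintro ⟨a, a'⟩ hp ⟨b, b'⟩ hp' heq
    have h := fun i => eq_and_eq_of_mul_sub_mul_eq hqq' (hG a (hS _ hp).1 i) (hG b (hS _ hp').1 i)
      (congrFun heq i)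
    exact Prod.ext (funext fun i => (h i).1) (funext fun i => (h i).2)
  calc (#S : ℝ) ≤ #(Fintype.piFinset fun i => Icc (-⌊R i⌋) ⌊R i⌋) :=
        Nat.cast_le.2 (card_le_card_of_injOn _ hmaps hinj)
    _ ≤ ∏ i, (2 * R i + 1) := card_piFinset_Icc_floor_le fun i =>
        div_nonneg (mul_nonneg (by positivity) (hw i)) (by positivity)
    _ = ∏ i, (q * q' * (w i + w' i) / (2 * π) + 1) := by
        refine prod_congr rfl fun i _ => ?_
        simp only [R]
        field_simp
        ring

theorem measureReal_boxUnion_inter_le [Fintype ι] {q q' : ℕ} (hq : 0 < q) (hq' : 0 < q')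
    (hqq' : q.Coprime q') {G G' : Finset (ι → ℕ)} (hG : ∀ a ∈ G, ∀ i, 1 ≤ a i ∧ a i ≤ q)
    {w w' : ι → ℝ} (hw : ∀ i, 0 ≤ w i) (hw' : ∀ i, 0 ≤ w' i) :
    volume.real (boxUnion q G w ∩ boxUnion q' G' w') ≤
      ∏ i, w i * (q * q' * (w i + w' i) / (2 * π) + 1) := by
  classical
  set S := {p ∈ G ×ˢ G' | (box (rationalCenter q p.1) w ∩ box (rationalCenter q' p.2) w').Nonempty}
  have hsub : boxUnion q G w ∩ boxUnion q' G' w' ⊆ ⋃ p ∈ S, box (rationalCenter q p.1) w := by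
    rintro x ⟨hx, hx'⟩
    obtain ⟨a, ha, hxa⟩ := Set.mem_iUnion₂.1 hx
    obtain ⟨a', ha', hxa'⟩ := Set.mem_iUnion₂.1 hx'
    exact Set.mem_iUnion₂.2 ⟨(a, a'), Finset.mem_filter.2 ⟨Finset.mem_product.2 ⟨ha, ha'⟩,
      x, hxa, hxa'⟩, hxa⟩
  have hfin : volume (⋃ p ∈ S, box (rationalCenter q p.1) w) ≠ ⊤ :=
    (measure_biUnion_lt_top S.finite_toSet fun p _ => by simp [volume_box _ hw]).ne
  calc volume.real (boxUnion q G w ∩ boxUnion q' G' w')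
      ≤ ∑ p ∈ S, volume.real (box (rationalCenter q p.1) w) :=
        (measureReal_mono hsub hfin).trans (measureReal_biUnion_finset_le _ _)
    _ = #S * ∏ i, w i := by simp [measureReal_box _ hw]
    _ ≤ (∏ i, (q * q' * (w i + w' i) / (2 * π) + 1)) * ∏ i, w i := by
        gcongr
        · exact prod_nonneg fun i _ => hw i
        · refine card_le_of_forall_inter_nonempty hq hq' hqq' hG
            (fun i => add_nonneg (hw i) (hw' i)) fun p hp => ?_
          obtain ⟨hp, hne⟩ := Finset.mem_filter.1 hp
          exact ⟨(Finset.mem_product.1 hp).1, hne⟩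
    _ = ∏ i, w i * (q * q' * (w i + w' i) / (2 * π) + 1) := by
        rw [← prod_mul_distrib]
        exact prod_congr rfl fun i _ => mul_comm _ _

def boxSides (n : ℕ) (x y : ℝ) : Fin n → ℝ := fun i => if (i : ℕ) = 0 then x else y

theorem boxSides_nonneg {n : ℕ} {x y : ℝ} (hx : 0 ≤ x) (hy : 0 ≤ y) (i : Fin n) :
    0 ≤ boxSides n x y i := by
  unfold boxSides
  split_ifs <;> assumption

theorem prod_ite_val_eq_zero {M : Type*} [CommMonoid M] {n : ℕ} (hn : n ≠ 0) (x y : M) :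
    ∏ i : Fin n, (if (i : ℕ) = 0 then x else y) = x * y ^ (n - 1) := by
  obtain ⟨m, rfl⟩ := Nat.exists_eq_succ_of_ne_zero hn
  simp [Fin.prod_univ_succ]

theorem rpow_div_sub_one_pow {n : ℕ} (hn : 2 ≤ n) {x : ℝ} (hx : 0 ≤ x) (r : ℝ) :
    (x ^ (r / ((n : ℝ) - 1))) ^ (n - 1) = x ^ r := by
  have hn' : (n : ℝ) - 1 ≠ 0 := by
    have : (2 : ℝ) ≤ n := by exact_mod_cast hn
    linarith
  rw [← Real.rpow_mul_natCast hx, Nat.cast_sub (by omega), Nat.cast_one, div_mul_cancel₀ _ hn']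

-- One coordinate of the overlap bound: a side length times the number `2R + 1` of possible
-- values of `a i * q' - a' i * q`.
theorem mul_cross_add_one_le {L y q q' w w' : ℝ} (hL : 0 < L) (hy : L⁻¹ ≤ y)
    (hq : q ∈ Set.Icc 0 (2 * L)) (hq' : q' ∈ Set.Icc 0 (2 * L)) (hw : w ∈ Set.Icc 0 (y / L))
    (hw' : w' ∈ Set.Icc 0 (y / L)) : w * (q * q' * (w + w') / (2 * π) + 1) ≤ 3 * y ^ 2 := by
  obtain ⟨hq0, hq⟩ := hq
  obtain ⟨hq'0, hq'⟩ := hq'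
  obtain ⟨hw0, hw⟩ := hw
  obtain ⟨hw'0, hw'⟩ := hw'
  have hy0 : 0 < y := (inv_pos.2 hL).trans_le hy
  have hcross : q * q' * (w + w') / (2 * π) ≤ 2 * L * y := by
    rw [div_le_iff₀ (by positivity)]
    calc q * q' * (w + w') ≤ (2 * L) * (2 * L) * (2 * (y / L)) := by
          gcongr
          linarith
      _ = 4 * (2 * L * y) := by field_simp; ring
      _ ≤ 2 * L * y * (2 * π) := by nlinarith [pi_gt_three, mul_pos hL hy0]
  have hyL : y / L ≤ y ^ 2 := by
    have : 1 ≤ y * L := (inv_le_iff_one_le_mul₀ hL).1 hy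
    rw [div_le_iff₀ hL]
    nlinarith
  have hcross0 : 0 ≤ q * q' * (w + w') / (2 * π) :=
    div_nonneg (mul_nonneg (mul_nonneg hq0 hq'0) (add_nonneg hw0 hw'0)) (by positivity)
  calc w * (q * q' * (w + w') / (2 * π) + 1) ≤ y / L * (2 * L * y + 1) :=
        mul_le_mul hw (by linarith) (by linarith) (by positivity)
    _ = 2 * y ^ 2 + y / L := by field_simp
    _ ≤ 3 * y ^ 2 := by linarith

theorem rpow_neg_one_add_le {L q α : ℝ} (hL : 0 < L) (hq : L ≤ q) (hα : 0 ≤ α) :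
    q ^ (-(1 + α)) ≤ L ^ (-α) / L := by
  calc q ^ (-(1 + α)) ≤ L ^ (-(1 + α)) := Real.rpow_le_rpow_of_nonpos hL hq (by linarith)
    _ = L ^ (-α) / L := by
        rw [neg_add, Real.rpow_add hL, Real.rpow_neg_one, div_eq_mul_inv, mul_comm]

theorem inv_le_rpow_neg {L α : ℝ} (hL : 1 ≤ L) (hα : α ≤ 1) : L⁻¹ ≤ L ^ (-α) := by
  rw [← Real.rpow_neg_one]
  exact Real.rpow_le_rpow_of_exponent_le hL (by linarith)

theorem prod_boxSides_mul_cross_le {n : ℕ} (hn : 2 ≤ n) {L q q' x y x' y' : ℝ} (hL : 1 ≤ L)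
    (hq : q ∈ Set.Icc L (2 * L)) (hq' : q' ∈ Set.Icc L (2 * L))
    (hx : x ∈ Set.Icc 0 (1 / q)) (hx' : x' ∈ Set.Icc 0 (1 / q'))
    (hy : y ∈ Set.Icc 0 (q ^ (-(1 + 1 / ((n : ℝ) - 1)))))
    (hy' : y' ∈ Set.Icc 0 (q' ^ (-(1 + 1 / ((n : ℝ) - 1))))) :
    ∏ i, boxSides n x y i * (q * q' * (boxSides n x y i + boxSides n x' y' i) / (2 * π) + 1) ≤
      3 ^ n / L ^ 2 := by
  set α := 1 / ((n : ℝ) - 1)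
  have hn1 : (1 : ℝ) ≤ n - 1 := by
    have : (2 : ℝ) ≤ n := by exact_mod_cast hn
    linarith
  have hα0 : 0 ≤ α := by positivity
  have hα1 : α ≤ 1 := (div_le_one (by linarith)).2 hn1
  have hL0 : 0 < L := by linarith
  have hq0 : q ∈ Set.Icc 0 (2 * L) := ⟨hL0.le.trans hq.1, hq.2⟩
  have hq'0 : q' ∈ Set.Icc 0 (2 * L) := ⟨hL0.le.trans hq'.1, hq'.2⟩
  have hinv {p z : ℝ} (hp : p ∈ Set.Icc L (2 * L)) (hz : z ∈ Set.Icc 0 (1 / p)) :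
      z ∈ Set.Icc 0 (1 / L) :=
    ⟨hz.1, hz.2.trans (one_div_le_one_div_of_le hL0 hp.1)⟩
  have hrpow {p z : ℝ} (hp : p ∈ Set.Icc L (2 * L)) (hz : z ∈ Set.Icc 0 (p ^ (-(1 + α)))) :
      z ∈ Set.Icc 0 (L ^ (-α) / L) :=
    ⟨hz.1, hz.2.trans (rpow_neg_one_add_le hL0 hp.1 hα0)⟩
  have hfactor : ∀ i, boxSides n x y i *
      (q * q' * (boxSides n x y i + boxSides n x' y' i) / (2 * π) + 1) ≤
        if (i : ℕ) = 0 then 3 * 1 ^ 2 else 3 * (L ^ (-α)) ^ 2 := by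
    intro i
    unfold boxSides
    split_ifs
    · exact mul_cross_add_one_le hL0 (inv_le_one_of_one_le₀ hL) hq0 hq'0 (hinv hq hx) (hinv hq' hx')
    · exact mul_cross_add_one_le hL0 (inv_le_rpow_neg hL hα1) hq0 hq'0 (hrpow hq hy) (hrpow hq' hy')
  calc _ ≤ ∏ i : Fin n, (if (i : ℕ) = 0 then 3 * 1 ^ 2 else 3 * (L ^ (-α)) ^ 2) :=
        prod_le_prod (fun i _ => mul_nonneg (boxSides_nonneg hx.1 hy.1 i) (add_nonneg (div_nonneg
          (mul_nonneg (mul_nonneg hq0.1 hq'0.1) (add_nonneg (boxSides_nonneg hx.1 hy.1 i)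
            (boxSides_nonneg hx'.1 hy'.1 i))) (by positivity)) zero_le_one)) fun i _ => hfactor i
    _ = 3 ^ n * ((L ^ (-1 / ((n : ℝ) - 1))) ^ (n - 1)) ^ 2 := by
        rw [prod_ite_val_eq_zero (by omega), neg_div, one_pow, mul_one, mul_pow, ← pow_mul,
          ← pow_mul, mul_comm 2, pow_mul, ← mul_assoc, ← pow_succ', Nat.sub_add_cancel (by omega)]
    _ = 3 ^ n / L ^ 2 := by
        rw [rpow_div_sub_one_pow hn hL0.le, Real.rpow_neg_one, inv_pow, div_eq_mul_inv]

theorem le_measureReal_boxUnion_boxSides {n q : ℕ} (hn : 2 ≤ n) (hq : 0 < q) {c x y : ℝ}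
    (hc : 0 ≤ c) {G : Finset (Fin n → ℕ)} (hG : c * q ^ n ≤ #G) (hx : c / q ≤ x)
    (hx1 : x ≤ 1 / q) (hy : c * q ^ (-(1 + 1 / ((n : ℝ) - 1))) ≤ y)
    (hy1 : y ≤ q ^ (-(1 + 1 / ((n : ℝ) - 1)))) :
    c ^ (n + 1) / q ≤ volume.real (boxUnion q G (boxSides n x y)) := by
  set β := -(1 + 1 / ((n : ℝ) - 1))
  have hn2 : (2 : ℝ) ≤ n := by exact_mod_cast hn
  have hn1 : (n : ℝ) - 1 ≠ 0 := by linarith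
  have hα0 : 0 ≤ 1 / ((n : ℝ) - 1) := div_nonneg zero_le_one (by linarith)
  have hq1 : (1 : ℝ) ≤ q := by exact_mod_cast hq
  have hx0 : 0 ≤ x := (by positivity : 0 ≤ c / q).trans hx
  have hy0 : 0 ≤ y := (by positivity : 0 ≤ c * q ^ β).trans hy
  have hside : ∀ i, boxSides n x y i < 2 * π / q := by
    intro i
    refine lt_of_le_of_lt ?_ ((div_lt_div_iff_of_pos_right (by positivity)).2
      (by linarith [pi_gt_three] : 1 < 2 * π))
    unfold boxSides
    split_ifs
    · exact hx1
    · refine hy1.trans ?_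
      rw [one_div, ← Real.rpow_neg_one]
      exact Real.rpow_le_rpow_of_exponent_le hq1 (by simp only [β]; linarith)
  have hpow : (q ^ β : ℝ) ^ (n - 1) = ((q : ℝ) ^ n)⁻¹ := by
    rw [show β = -n / ((n : ℝ) - 1) by simp only [β]; field_simp; ring, rpow_div_sub_one_pow hn
      (by positivity), Real.rpow_neg (by positivity), Real.rpow_natCast]
  rw [measureReal_boxUnion G (boxSides_nonneg hx0 hy0) hside]
  calc c ^ (n + 1) / q = (c * q ^ n) * ((c / q) * (c * q ^ β) ^ (n - 1)) := by
        rw [mul_pow, hpow, show n + 1 = n - 1 + 2 by omega, pow_add]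
        field_simp
    _ ≤ #G * ∏ i, boxSides n x y i := by
        rw [show ∏ i, boxSides n x y i = x * y ^ (n - 1) from prod_ite_val_eq_zero (by omega) x y]
        gcongr

theorem measureReal_boxUnion_boxSides_inter_le {n q q' : ℕ} (hn : 2 ≤ n) (hq : q.Prime)
    (hq' : q'.Prime) (hne : q ≠ q') {Q : ℝ} (hQ : 2 ≤ Q) (hqQ : (q : ℝ) ∈ Set.Icc (Q / 2) Q)
    (hq'Q : (q' : ℝ) ∈ Set.Icc (Q / 2) Q) {G G' : Finset (Fin n → ℕ)}
    (hG : ∀ a ∈ G, ∀ i, 1 ≤ a i ∧ a i ≤ q) {x y x' y' : ℝ}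
    (hx : x ∈ Set.Icc 0 (1 / (q : ℝ))) (hx' : x' ∈ Set.Icc 0 (1 / (q' : ℝ)))
    (hy : y ∈ Set.Icc 0 ((q : ℝ) ^ (-(1 + 1 / ((n : ℝ) - 1)))))
    (hy' : y' ∈ Set.Icc 0 ((q' : ℝ) ^ (-(1 + 1 / ((n : ℝ) - 1))))) :
    volume.real (boxUnion q G (boxSides n x y) ∩ boxUnion q' G' (boxSides n x' y')) ≤
      4 * 3 ^ n / Q ^ 2 := by
  have hQ2 {p : ℝ} (hp : p ∈ Set.Icc (Q / 2) Q) : p ∈ Set.Icc (Q / 2) (2 * (Q / 2)) :=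
    ⟨hp.1, by linarith [hp.2]⟩
  calc _ ≤ ∏ i, boxSides n x y i *
        (q * q' * (boxSides n x y i + boxSides n x' y' i) / (2 * π) + 1) :=
        measureReal_boxUnion_inter_le hq.pos hq'.pos ((Nat.coprime_primes hq hq').2 hne) hG
          (boxSides_nonneg hx.1 hy.1) (boxSides_nonneg hx'.1 hy'.1)
    _ ≤ 3 ^ n / (Q / 2) ^ 2 :=
        prod_boxSides_mul_cross_le hn (by linarith) (hQ2 hqQ) (hQ2 hq'Q) hx hx' hy hy'
    _ = 4 * 3 ^ n / Q ^ 2 := by field_simp; ring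

end RationalBoxes

theorem sq_div_div_le_of_sq_card_mul_le {a c K Q N M ℓ : ℝ} (hc : 0 < c) (hac : a ≤ c)
    (hK : 0 ≤ K) (hQ : 0 < Q) (hℓ : 1 / 2 ≤ ℓ) (hN : c * Q / ℓ ≤ N) (hM : 0 ≤ M)
    (h : (N * (a / Q)) ^ 2 ≤ M * (N * (a / Q) + N ^ 2 * (K / Q ^ 2))) :
    a ^ 2 / (1 + 2 * K) / ℓ ≤ M := by
  have hℓ0 : 0 < ℓ := by linarith
  have hN0 : 0 < N := (by positivity : 0 < c * Q / ℓ).trans_le hN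
  have hscaled : N * a ^ 2 ≤ M * (a * Q + N * K) := by
    refine le_of_mul_le_mul_left ?_ hN0
    rw [← div_le_div_iff_of_pos_right (by positivity : 0 < Q ^ 2)]
    have e₁ : (N * (a / Q)) ^ 2 = N * (N * a ^ 2) / Q ^ 2 := by ring
    have e₂ : M * (N * (a / Q) + N ^ 2 * (K / Q ^ 2)) = N * (M * (a * Q + N * K)) / Q ^ 2 := by
      field_simp
    rwa [e₁, e₂] at h
  have haQ : a * Q ≤ N * ℓ := by
    calc a * Q ≤ c * Q := by gcongr
      _ = c * Q / ℓ * ℓ := (div_mul_cancel₀ _ hℓ0.ne').symm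
      _ ≤ N * ℓ := by gcongr
  have hNK : N * K ≤ 2 * K * N * ℓ := by nlinarith [(by positivity : 0 ≤ N * K)]
  rw [div_div, div_le_iff₀ (by positivity)]
  refine le_of_mul_le_mul_left (hscaled.trans ?_) hN0
  calc M * (a * Q + N * K) ≤ M * (N * ℓ + 2 * K * N * ℓ) :=
        mul_le_mul_of_nonneg_left (add_le_add haQ hNK) hM
    _ = N * (M * ((1 + 2 * K) * ℓ)) := by ring
open RationalBoxes in
/-- Measure of the union of well-distributed rational boxes (Proposition 4.3 of the paper):
given at least `cQ/log Q` primes `q ∈ [Q/2, Q]`, for each a family `G(q)` of at least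
`c q^n` numerator tuples in `{1,…,q}^n`, and boxes centered at `(2πa₁/q, …, 2πaₙ/q)`
with side-lengths `h₁(q) ≍ q⁻¹` and `h₂(q) ≍ q^{-1-1/(n-1)}`, the union of all the boxes
has Lebesgue measure at least `c'/log Q`, with `c'` depending only on `n` and `c`. -/
theorem measure_of_union_of_rational_boxes
    (n : ℕ) (hn : 2 ≤ n) (c : ℝ) (hc : c ∈ Set.Ioo (0 : ℝ) 1) :
    ∃ c' : ℝ, 0 < c' ∧
      ∀ Q : ℝ, 2 ≤ Q →
      ∀ P : Finset ℕ,
        (∀ q ∈ P, q.Prime ∧ Q / 2 ≤ (q : ℝ) ∧ (q : ℝ) ≤ Q) →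
        c * Q / Real.log Q ≤ (P.card : ℝ) →
      ∀ G : ℕ → Finset (Fin n → ℕ),
        (∀ q ∈ P, (∀ a ∈ G q, ∀ i, 1 ≤ a i ∧ a i ≤ q) ∧
          c * (q : ℝ) ^ n ≤ ((G q).card : ℝ)) →
      ∀ h₁ h₂ : ℕ → ℝ,
        (∀ q ∈ P,
          c / (q : ℝ) ≤ h₁ q ∧ h₁ q ≤ 1 / (q : ℝ) ∧
          c * (q : ℝ) ^ (-(1 + 1 / ((n : ℝ) - 1))) ≤ h₂ q ∧
          h₂ q ≤ (q : ℝ) ^ (-(1 + 1 / ((n : ℝ) - 1)))) →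
        ENNReal.ofReal (c' / Real.log Q) ≤
          volume (⋃ q ∈ P, ⋃ a ∈ G q,
            {x : Fin n → ℝ | ∀ i : Fin n,
              |x i - 2 * Real.pi * (a i : ℝ) / (q : ℝ)| ≤
                (if (i : ℕ) = 0 then h₁ q else h₂ q) / 2}) := by
  obtain ⟨hc0, hc1⟩ := hc
  set K : ℝ := 4 * 3 ^ n
  refine ⟨(c ^ (n + 1)) ^ 2 / (1 + 2 * K), by positivity,
    fun Q hQ P hP hPcard G hG h₁ h₂ hh => ?_⟩
  set A : ℕ → Set (Fin n → ℝ) := fun q => boxUnion q (G q) (boxSides n (h₁ q) (h₂ q))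
  change _ ≤ volume (⋃ q ∈ P, A q)
  have hQ0 : 0 < Q := by linarith
  have hside₁ : ∀ q ∈ P, h₁ q ∈ Set.Icc 0 (1 / (q : ℝ)) := fun q hq =>
    ⟨(by positivity : 0 ≤ c / q).trans (hh q hq).1, (hh q hq).2.1⟩
  have hside₂ : ∀ q ∈ P, h₂ q ∈ Set.Icc 0 ((q : ℝ) ^ (-(1 + 1 / ((n : ℝ) - 1)))) := fun q hq =>
    ⟨(by positivity : 0 ≤ c * (q : ℝ) ^ (-(1 + 1 / ((n : ℝ) - 1)))).trans (hh q hq).2.2.1,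
      (hh q hq).2.2.2⟩
  have hlower : ∀ q ∈ P, c ^ (n + 1) / Q ≤ volume.real (A q) := fun q hq =>
    (div_le_div_of_nonneg_left (by positivity) (by exact_mod_cast (hP q hq).1.pos)
      (hP q hq).2.2).trans (le_measureReal_boxUnion_boxSides hn (hP q hq).1.pos hc0.le
        (hG q hq).2 (hh q hq).1 (hh q hq).2.1 (hh q hq).2.2.1 (hh q hq).2.2.2)
  have hinter : ∀ q ∈ P, ∀ q' ∈ P, q ≠ q' → volume.real (A q ∩ A q') ≤ K / Q ^ 2 :=
    fun q hq q' hq' hne => measureReal_boxUnion_boxSides_inter_le hn (hP q hq).1 (hP q' hq').1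
      hne hQ (hP q hq).2 (hP q' hq').2 (hG q hq).1 (hside₁ q hq) (hside₁ q' hq')
      (hside₂ q hq) (hside₂ q' hq')
  have key := sq_card_mul_le_measureReal_biUnion_mul volume
    (fun q _ => measurableSet_boxUnion _ _ _)
    (fun q hq => volume_boxUnion_ne_top _ _ (boxSides_nonneg (hside₁ q hq).1 (hside₂ q hq).1))
    (by positivity) hlower (by positivity) hinter
  exact ENNReal.ofReal_le_of_le_toReal (sq_div_div_le_of_sq_card_mul_le hc0
    (pow_le_of_le_one hc0.le hc1.le (by omega)) (by positivity) hQ0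
    (by linarith [Real.log_two_gt_d9, Real.log_le_log two_pos hQ]) hPcard measureReal_nonneg key)
end
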